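/- arXiv:2311.02685 — 2 statements merged into one kernel-verified Lean document; each statement's English description precedes it below -/
import Mathlib

section
/- Let x be an N-position of Moore's NIM game NIM(n,k) and let K ⊆ {1,…,n} be a set of pile indices with |K| = k. If y and y' are both P-positions reachable from x by a single move that decreases only piles with indices in K, then S(y) = S(y'); i.e., all P-positions reachable from x by moves supported on K leave the same total number of stones. -/
/-!
A position is a P-position exactly when it is *balanced*: every binary column sum is divisible
by `k + 1`. No move keeps a position balanced (at the highest changed digit the column sum drops by
between `1` and `k`), and every unbalanced position can be balanced by a move, fixing columns from
the top down and decreasing at most `k` piles. Two balanced positions that agree outside `k`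
piles have, in every column, parts on those piles that are congruent modulo `k + 1` and at most
`k`, hence equal; so all column sums agree and so do the totals.
-/

/-- Smith's remoteness function for an impartial game with move relation `mv`. -/
def IsRemoteness {α : Type*} (mv : α → α → Prop) (R : α → ℕ) : Prop :=
  ∀ x : α,
    ((∀ y, ¬ mv x y) → R x = 0) ∧
    ((∃ y, mv x y ∧ Even (R y)) →
      ∃ y, mv x y ∧ Even (R y) ∧ R x = R y + 1 ∧ ∀ z, mv x z → Even (R z) → R y ≤ R z) ∧
    ((∃ y, mv x y) → (∀ y, mv x y → ¬ Even (R y)) →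
      ∃ y, mv x y ∧ R x = R y + 1 ∧ ∀ z, mv x z → R z ≤ R y)

/-- A move of Moore's NIM game NIM(n,k): strictly decrease the piles in some
nonempty set of at most `k` indices, leaving all other piles unchanged. -/
def MooreMove {ι : Type*} [Fintype ι] (k : ℕ) (x y : ι → ℕ) : Prop :=
  (∀ i, y i ≤ x i) ∧ y ≠ x ∧ (Finset.univ.filter fun i => y i < x i).card ≤ k

open Finset

namespace IsRemoteness

variable {α : Type*} {mv : α → α → Prop} {R : α → ℕ}

theorem even_iff_forall_not_even (hR : IsRemoteness mv R) (x : α) :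
    Even (R x) ↔ ∀ y, mv x y → ¬ Even (R y) := by
  constructor
  · intro hx y hxy hy
    obtain ⟨y', -, hy', hRx, -⟩ := (hR x).2.1 ⟨y, hxy, hy⟩
    exact Nat.even_add_one.mp (hRx ▸ hx) hy'
  · intro hodd
    by_cases hmove : ∃ y, mv x y
    · obtain ⟨y, hxy, hRx, -⟩ := (hR x).2.2 hmove hodd
      rw [hRx, Nat.even_add_one]
      exact hodd y hxy
    · rw [(hR x).1 (not_exists.mp hmove)]
      exact Even.zero

theorem even_iff_of_independent_of_absorbing (hR : IsRemoteness mv R)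
    (hwf : WellFounded fun y x => mv x y) {P : α → Prop}
    (hindep : ∀ x y, P x → mv x y → ¬ P y) (habsorb : ∀ x, ¬ P x → ∃ y, mv x y ∧ P y)
    (x : α) : Even (R x) ↔ P x := by
  induction x using hwf.induction with
  | _ x ih =>
    rw [hR.even_iff_forall_not_even]
    constructor
    · intro hodd
      by_contra hx
      obtain ⟨y, hxy, hy⟩ := habsorb x hx
      exact hodd y hxy ((ih y hxy).2 hy)
    · exact fun hx y hxy hy => hindep x y hx hxy ((ih y hxy).1 hy)

end IsRemoteness

theorem Nat.div_two_pow_succ (a J : ℕ) : a / 2 ^ (J + 1) = a / 2 ^ J / 2 := by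
  rw [Nat.div_div_eq_div_mul, pow_succ]

theorem Nat.mod_two_pow_eq_sum (a N : ℕ) :
    a % 2 ^ N = ∑ j ∈ range N, 2 ^ j * (a / 2 ^ j % 2) := by
  induction N with
  | zero => simp [Nat.mod_one]
  | succ N ih => rw [Nat.mod_pow_succ, ih, sum_range_succ]

section Piles

variable {ι : Type*} [Fintype ι]

theorem lt_two_pow_of_sum_le {x : ι → ℕ} {N : ℕ} (h : ∑ i, x i ≤ N) (i : ι) : x i < 2 ^ N :=
  calc x i ≤ ∑ i, x i := single_le_sum (fun _ _ => Nat.zero_le _) (mem_univ i)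
    _ ≤ N := h
    _ < 2 ^ N := Nat.lt_two_pow_self

namespace MooreMove

variable {k : ℕ} {x y : ι → ℕ}

theorem sum_lt (h : MooreMove k x y) : ∑ i, y i < ∑ i, x i := by
  obtain ⟨hle, hne, -⟩ := h
  obtain ⟨i, hi⟩ : ∃ i, y i ≠ x i := Function.ne_iff.mp hne
  exact sum_lt_sum (fun i _ => hle i) ⟨i, mem_univ i, lt_of_le_of_ne (hle i) hi⟩

theorem apply_eq_of_notMem {K : Finset ι} (h : MooreMove k x y) (hK : ∀ i, y i < x i → i ∈ K)
    {i : ι} (hi : i ∉ K) : y i = x i :=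
  le_antisymm (h.1 i) (not_lt.mp fun hlt => hi (hK i hlt))

end MooreMove

theorem wellFounded_mooreMove (k : ℕ) : WellFounded fun y x : ι → ℕ => MooreMove k x y :=
  Subrelation.wf (fun h => MooreMove.sum_lt h)
    (InvImage.wf (fun x : ι → ℕ => ∑ i, x i) wellFounded_lt)

end Piles

namespace MooreNim

variable {ι : Type*} [Fintype ι] {k : ℕ}

def digitSum (x : ι → ℕ) (j : ℕ) : ℕ := ∑ i, x i / 2 ^ j % 2

def IsBalanced (k : ℕ) (x : ι → ℕ) : Prop := ∀ j, k + 1 ∣ digitSum x j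

theorem digitSum_eq_zero_of_lt {x : ι → ℕ} {N j : ℕ} (hx : ∀ i, x i < 2 ^ N) (hj : N ≤ j) :
    digitSum x j = 0 :=
  sum_eq_zero fun i _ => by
    rw [Nat.div_eq_of_lt ((hx i).trans_le (Nat.pow_le_pow_right two_pos hj))]
    rfl

theorem sum_eq_sum_range_two_pow_mul_digitSum {x : ι → ℕ} {N : ℕ} (hx : ∀ i, x i < 2 ^ N) :
    ∑ i, x i = ∑ j ∈ range N, 2 ^ j * digitSum x j := by
  simp only [digitSum, mul_sum]
  rw [sum_comm]
  exact sum_congr rfl fun i _ => by rw [← Nat.mod_two_pow_eq_sum, Nat.mod_eq_of_lt (hx i)]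

theorem not_isBalanced_of_mooreMove {x y : ι → ℕ} (hx : IsBalanced k x) (hxy : MooreMove k x y) :
    ¬ IsBalanced k y := by
  classical
  obtain ⟨hle, hne, hcard⟩ := hxy
  have hagree : ∃ J, ∀ i, y i / 2 ^ J = x i / 2 ^ J := ⟨∑ i, x i, fun i => by
    rw [Nat.div_eq_of_lt (lt_two_pow_of_sum_le le_rfl i),
      Nat.div_eq_of_lt ((hle i).trans_lt (lt_two_pow_of_sum_le le_rfl i))]⟩
  -- `j` is the highest binary digit at which some pile changes
  obtain ⟨j, hj⟩ : ∃ j, Nat.find hagree = j + 1 := Nat.exists_eq_add_one.mpr <|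
    Nat.pos_of_ne_zero fun h => hne <| funext fun i => by simpa [h] using Nat.find_spec hagree i
  have hhigh : ∀ i, y i / 2 ^ j / 2 = x i / 2 ^ j / 2 := by
    simpa only [hj, Nat.div_two_pow_succ] using Nat.find_spec hagree
  set D := univ.filter fun i => y i / 2 ^ j ≠ x i / 2 ^ j
  have hdigit : ∀ i, x i / 2 ^ j % 2 = y i / 2 ^ j % 2 + if i ∈ D then 1 else 0 := by
    intro i
    have := Nat.div_le_div_right (c := 2 ^ j) (hle i)
    have := hhigh i
    simp only [D, mem_filter, mem_univ, true_and]
    split_ifs <;> omega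
  have hsum : digitSum x j = digitSum y j + #D := by
    simp only [digitSum, hdigit, sum_add_distrib, sum_ite_mem, univ_inter, sum_const, smul_eq_mul,
      mul_one]
  have hD_pos : 0 < #D := by
    obtain ⟨i, hi⟩ : ∃ i, y i / 2 ^ j ≠ x i / 2 ^ j := by
      simpa using Nat.find_min hagree (hj ▸ Nat.lt_succ_self j)
    exact card_pos.mpr ⟨i, by simpa [D] using hi⟩
  have hD_le : #D ≤ k := (card_le_card fun i hi => by
    simp only [D, mem_filter, mem_univ, true_and] at hi ⊢
    exact lt_of_le_of_ne (hle i) fun h => hi (h ▸ rfl)).trans hcard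
  intro hy
  have := Nat.le_of_dvd hD_pos ((Nat.dvd_add_right (hy j)).mp (hsum ▸ hx j))
  omega

theorem exists_digit_counts {m : ℕ} (c : ℕ) (hm : m ≤ k) :
    ∃ t r, t ≤ m ∧ r ≤ c ∧ m + r ≤ k ∧ k + 1 ∣ t + (c - r) := by
  obtain ⟨a, q, hq, rfl⟩ : ∃ a q, q < k + 1 ∧ c = (k + 1) * a + q :=
    ⟨c / (k + 1), c % (k + 1), Nat.mod_lt _ k.succ_pos, (Nat.div_add_mod c (k + 1)).symm⟩
  by_cases hq0 : q = 0
  · exact ⟨0, 0, by omega, by omega, by omega, ⟨a, by omega⟩⟩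
  by_cases hfill : k + 1 - q ≤ m
  · exact ⟨k + 1 - q, 0, hfill, by omega, by omega, ⟨a + 1, by rw [mul_add]; omega⟩⟩
  · exact ⟨0, q, by omega, by omega, by omega, ⟨a, by omega⟩⟩

theorem exists_balance_digit [DecidableEq ι] (J : ℕ) (z : ι → ℕ) {S : Finset ι} (hS : #S ≤ k) :
    ∃ (z' : ι → ℕ) (S' : Finset ι), S ⊆ S' ∧ #S' ≤ k ∧ (∀ i ∉ S', z' i = z i) ∧
      (∀ i, z' i / 2 ^ (J + 1) = z i / 2 ^ (J + 1)) ∧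
      (∀ i ∈ S', i ∉ S → z' i / 2 ^ J < z i / 2 ^ J) ∧ k + 1 ∣ digitSum z' J := by
  set F := Sᶜ.filter fun i => z i / 2 ^ J % 2 = 1
  obtain ⟨t, r, ht, hr, hSr, hdvd⟩ := exists_digit_counts #F hS
  obtain ⟨T, hTS, rfl⟩ := exists_subset_card_eq ht
  obtain ⟨Q, hQF, rfl⟩ := exists_subset_card_eq hr
  have hSQ : Disjoint S Q :=
    disjoint_of_subset_right (hQF.trans (filter_subset _ _)) disjoint_compl_right
  -- the piles of `S ∪ Q` get digit `J` equal to `1` exactly on `T`, and all lower digits `0`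
  set z' : ι → ℕ := fun i =>
    if i ∈ S ∪ Q then 2 ^ J * (2 * (z i / 2 ^ (J + 1)) + if i ∈ T then 1 else 0) else z i
  have hz' : ∀ i ∈ S ∪ Q, z' i / 2 ^ J = 2 * (z i / 2 ^ (J + 1)) + if i ∈ T then 1 else 0 :=
    fun i hi => by simp only [z', if_pos hi, Nat.mul_div_cancel_left _ (Nat.two_pow_pos J)]
  have hout : ∀ i ∉ S ∪ Q, z' i = z i := fun i hi => if_neg hi
  refine ⟨z', S ∪ Q, subset_union_left, by rwa [card_union_of_disjoint hSQ], hout, fun i => ?_,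
    fun i hi hiS => ?_, ?_⟩
  · by_cases hi : i ∈ S ∪ Q
    · rw [Nat.div_two_pow_succ, hz' i hi, Nat.div_two_pow_succ (z i)]
      split_ifs <;> omega
    · rw [hout i hi]
  · have hiQ : i ∈ Q := (mem_union.mp hi).resolve_left hiS
    have hdigit : z i / 2 ^ J % 2 = 1 := (mem_filter.mp (hQF hiQ)).2
    rw [hz' i hi, if_neg fun h => hiS (hTS h), Nat.div_two_pow_succ]
    omega
  · have hdigit :
        ∀ i, z' i / 2 ^ J % 2 = (if i ∈ T then 1 else 0) + if i ∈ F \ Q then 1 else 0 := by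
      intro i
      by_cases hi : i ∈ S ∪ Q
      · have hiFQ : i ∉ F \ Q := fun h => by
          simp only [F, mem_sdiff, mem_filter, mem_compl] at h
          exact (mem_union.mp hi).elim h.1.1 h.2
        rw [hz' i hi, if_neg hiFQ]
        split_ifs <;> omega
      · have hiS : i ∉ S := fun h => hi (mem_union_left _ h)
        have hiQ : i ∉ Q := fun h => hi (mem_union_right _ h)
        rw [hout i hi, if_neg fun h => hiS (hTS h)]
        simp only [F, mem_sdiff, mem_filter, mem_compl, hiS, hiQ, not_false_eq_true, true_and,
          and_true]
        split_ifs <;> omega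
    simp only [digitSum, hdigit, sum_add_distrib, sum_ite_mem, univ_inter, sum_const, smul_eq_mul,
      mul_one]
    rwa [card_sdiff_of_subset hQF]

theorem exists_balance_below [DecidableEq ι] (J : ℕ) (z : ι → ℕ) {S : Finset ι} (hS : #S ≤ k) :
    ∃ (w : ι → ℕ) (S' : Finset ι), S ⊆ S' ∧ #S' ≤ k ∧ (∀ i ∉ S', w i = z i) ∧
      (∀ i, w i / 2 ^ J = z i / 2 ^ J) ∧ (∀ i ∈ S', i ∉ S → w i < z i) ∧
      ∀ j < J, k + 1 ∣ digitSum w j := by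
  induction J generalizing z S with
  | zero =>
    exact ⟨z, S, subset_rfl, hS, fun _ _ => rfl, fun _ => rfl, fun _ h h' => absurd h h',
      fun _ h => absurd h (Nat.not_lt_zero _)⟩
  | succ J ih =>
    obtain ⟨z₁, S₁, hSS₁, hS₁, hout₁, hhigh₁, hlt₁, hdvd₁⟩ := exists_balance_digit J z hS
    obtain ⟨w, S', hS₁S', hS', hout, hhigh, hlt, hdvd⟩ := ih z₁ hS₁
    refine ⟨w, S', hSS₁.trans hS₁S', hS', fun i hi => ?_, fun i => ?_, fun i hi hiS => ?_,
      fun j hj => ?_⟩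
    · rw [hout i hi, hout₁ i fun h => hi (hS₁S' h)]
    · rw [Nat.div_two_pow_succ, hhigh, ← Nat.div_two_pow_succ, hhigh₁]
    · by_cases hi₁ : i ∈ S₁
      · exact Nat.lt_of_div_lt_div (hhigh i ▸ hlt₁ i hi₁ hiS)
      · exact hout₁ i hi₁ ▸ hlt i hi hi₁
    · rcases Nat.lt_succ_iff_lt_or_eq.mp hj with hj | rfl
      · exact hdvd j hj
      · simpa only [digitSum, hhigh] using hdvd₁

theorem exists_mooreMove_isBalanced {z : ι → ℕ} (hz : ¬ IsBalanced k z) :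
    ∃ w, MooreMove k z w ∧ IsBalanced k w := by
  classical
  obtain ⟨w, S, -, hS, hout, hhigh, hlt, hdvd⟩ :=
    exists_balance_below (∑ i, z i) z (S := ∅) (by simp)
  have hw : ∀ i, w i < 2 ^ ∑ i, z i := fun i => by
    have := hhigh i
    rw [Nat.div_eq_of_lt (lt_two_pow_of_sum_le le_rfl i), Nat.div_eq_zero_iff] at this
    exact this.resolve_left (Nat.two_pow_pos _).ne'
  have hbal : IsBalanced k w := fun j => by
    by_cases hj : j < ∑ i, z i
    · exact hdvd j hj
    · rw [digitSum_eq_zero_of_lt hw (not_lt.mp hj)]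
      exact dvd_zero _
  have hle : ∀ i, w i ≤ z i := fun i => by
    by_cases hi : i ∈ S
    · exact (hlt i hi (notMem_empty i)).le
    · exact (hout i hi).le
  refine ⟨w, ⟨hle, fun h => hz (h ▸ hbal), (card_le_card fun i hi => ?_).trans hS⟩, hbal⟩
  by_contra hiS
  simp only [mem_filter, mem_univ, true_and, hout i hiS, lt_irrefl] at hi

theorem even_remoteness_iff_isBalanced {R : (ι → ℕ) → ℕ} (hR : IsRemoteness (MooreMove k) R)
    (x : ι → ℕ) : Even (R x) ↔ IsBalanced k x :=
  hR.even_iff_of_independent_of_absorbing (wellFounded_mooreMove k)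
    (fun _ _ hx hxy => not_isBalanced_of_mooreMove hx hxy)
    (fun _ hx => exists_mooreMove_isBalanced hx) x

theorem digitSum_eq_of_eqOn_compl [DecidableEq ι] {K : Finset ι} {x y : ι → ℕ} (hK : #K ≤ k)
    (hx : IsBalanced k x) (hy : IsBalanced k y) (hxy : ∀ i ∉ K, x i = y i) (j : ℕ) :
    digitSum x j = digitSum y j := by
  have hsplit : ∀ z : ι → ℕ, digitSum z j = ∑ i ∈ K, z i / 2 ^ j % 2 + ∑ i ∈ Kᶜ, z i / 2 ^ j % 2 :=
    fun z => (sum_add_sum_compl K _).symm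
  have hcompl : ∑ i ∈ Kᶜ, x i / 2 ^ j % 2 = ∑ i ∈ Kᶜ, y i / 2 ^ j % 2 :=
    sum_congr rfl fun i hi => by rw [hxy i (mem_compl.mp hi)]
  have hsmall : ∀ z : ι → ℕ, ∑ i ∈ K, z i / 2 ^ j % 2 < k + 1 := fun z =>
    calc ∑ i ∈ K, z i / 2 ^ j % 2 ≤ ∑ _i ∈ K, 1 :=
          sum_le_sum fun i _ => Nat.le_of_lt_succ (Nat.mod_lt _ two_pos)
      _ < k + 1 := by rw [sum_const, smul_eq_mul, mul_one]; omega
  have hmod : ∑ i ∈ K, x i / 2 ^ j % 2 ≡ ∑ i ∈ K, y i / 2 ^ j % 2 [MOD k + 1] := by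
    refine Nat.ModEq.add_right_cancel' (∑ i ∈ Kᶜ, y i / 2 ^ j % 2) ?_
    calc _ = digitSum x j := by rw [hsplit x, hcompl]
      _ ≡ 0 [MOD k + 1] := Nat.modEq_zero_iff_dvd.mpr (hx j)
      _ ≡ digitSum y j [MOD k + 1] := (Nat.modEq_zero_iff_dvd.mpr (hy j)).symm
      _ = _ := hsplit y
  rw [hsplit x, hsplit y, hmod.eq_of_lt_of_lt (hsmall x) (hsmall y), hcompl]

theorem sum_eq_of_eqOn_compl [DecidableEq ι] {K : Finset ι} {x y : ι → ℕ} (hK : #K ≤ k)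
    (hx : IsBalanced k x) (hy : IsBalanced k y) (hxy : ∀ i ∉ K, x i = y i) :
    ∑ i, x i = ∑ i, y i := by
  have hxN := lt_two_pow_of_sum_le (Nat.le_add_right (∑ i, x i) (∑ i, y i))
  have hyN := lt_two_pow_of_sum_le (Nat.le_add_left (∑ i, y i) (∑ i, x i))
  generalize ∑ i, x i + ∑ i, y i = N at hxN hyN
  rw [sum_eq_sum_range_two_pow_mul_digitSum hxN, sum_eq_sum_range_two_pow_mul_digitSum hyN]
  simp only [digitSum_eq_of_eqOn_compl hK hx hy hxy]

end MooreNim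

theorem moore_same_stones_on_support_general (n k : ℕ)
    (R : (Fin n → ℕ) → ℕ) (hR : IsRemoteness (MooreMove k) R)
    (x : Fin n → ℕ)
    (K : Finset (Fin n)) (hK : K.card = k)
    (y y' : Fin n → ℕ)
    (hy : MooreMove k x y) (hyP : Even (R y)) (hyK : ∀ i, y i < x i → i ∈ K)
    (hy' : MooreMove k x y') (hy'P : Even (R y')) (hy'K : ∀ i, y' i < x i → i ∈ K) :
    ∑ i, y i = ∑ i, y' i :=
  MooreNim.sum_eq_of_eqOn_compl hK.le ((MooreNim.even_remoteness_iff_isBalanced hR y).mp hyP)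
    ((MooreNim.even_remoteness_iff_isBalanced hR y').mp hy'P)
    fun _ hi => (hy.apply_eq_of_notMem hyK hi).trans (hy'.apply_eq_of_notMem hy'K hi).symm

/-- If `x` is an N-position of Moore's NIM game NIM(n,k) and `K` is a set of
`k` pile indices, then any two P-positions reachable from `x` by a single move
decreasing only piles in `K` leave the same total number of stones. -/
theorem moore_same_stones_on_support (n k : ℕ) (hk : 0 < k) (hkn : k ≤ n)
    (R : (Fin n → ℕ) → ℕ) (hR : IsRemoteness (MooreMove k) R)
    (x : Fin n → ℕ) (hx : ¬ Even (R x))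
    (K : Finset (Fin n)) (hK : K.card = k)
    (y y' : Fin n → ℕ)
    (hy : MooreMove k x y) (hyP : Even (R y)) (hyK : ∀ i, y i < x i → i ∈ K)
    (hy' : MooreMove k x y') (hy'P : Even (R y')) (hy'K : ∀ i, y' i < x i → i ∈ K) :
    ∑ i, y i = ∑ i, y' i :=
  moore_same_stones_on_support_general n k R hR x K hK y y' hy hyP hyK hy' hy'P hy'K
end

section
/- Let 𝓗 ⊆ 2^{[n]} \ {∅} be a minimally transversal-free (MTF) hypergraph. Then for every k ∈ ℤ_{≥0}, N(k) = { x ∈ ℤ_{≥0}^n : m(x) = k and M(x) ∉ 𝓗^t }. -/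
/-- A move of the hypergraph NIM game `NIM_H`: strictly decrease the piles
whose index set forms a hyperedge of `H`, leaving all other piles unchanged. -/
def HypMove {n : ℕ} (H : Finset (Finset (Fin n))) (x y : Fin n → ℕ) : Prop :=
  (∀ i, y i ≤ x i) ∧ y ≠ x ∧ (Finset.univ.filter fun i => y i < x i) ∈ H

/-- `m(x)`, the minimum pile size of the position `x`. -/
noncomputable def mval {n : ℕ} (x : Fin n → ℕ) : ℕ := sInf (Set.range x)

/-- `M(x)`, the set of indices of minimum piles of the position `x`. -/
noncomputable def Mset {n : ℕ} (x : Fin n → ℕ) : Finset (Fin n) :=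
  Finset.univ.filter fun i => x i = mval x

/-- `T` is a transversal of the hypergraph `H`, i.e. `T ∈ H^t`. -/
def IsTransversal {n : ℕ} (H : Finset (Finset (Fin n))) (T : Finset (Fin n)) : Prop :=
  ∀ A ∈ H, (T ∩ A).Nonempty

/-- `P(k)`: positions with `m(x) = k` and `M(x) ∈ H^t`. -/
def PPos {n : ℕ} (H : Finset (Finset (Fin n))) (k : ℕ) (x : Fin n → ℕ) : Prop :=
  mval x = k ∧ IsTransversal H (Mset x)

/-- `N(k)`: positions from which a move to `P(k)` exists. -/
def NPos {n : ℕ} (H : Finset (Finset (Fin n))) (k : ℕ) (x : Fin n → ℕ) : Prop :=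
  ∃ y, HypMove H x y ∧ PPos H k y

/-- `H_S`, the subhypergraph of `H` induced by `S`. -/
def subHyp {n : ℕ} (H : Finset (Finset (Fin n))) (S : Finset (Fin n)) :
    Finset (Finset (Fin n)) :=
  H.filter (· ⊆ S)

/-- `H(x) = H_{[n] \ M(x)}`. -/
noncomputable def Hofx {n : ℕ} (H : Finset (Finset (Fin n))) (x : Fin n → ℕ) :
    Finset (Finset (Fin n)) :=
  subHyp H (Finset.univ \ Mset x)

/-- `H` is minimally transversal-free: `H ∩ H^t = ∅` and every nonempty proper
subset `S ⊊ [n]` admits a hyperedge `A ∈ H_S` that is a transversal of `H_S`. -/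
def MTF {n : ℕ} (H : Finset (Finset (Fin n))) : Prop :=
  (∀ A ∈ H, ¬ IsTransversal H A) ∧
  ∀ S : Finset (Fin n), S.Nonempty → S ≠ Finset.univ →
    ∃ A ∈ subHyp H S, IsTransversal (subHyp H S) A

lemma mval_le {n : ℕ} (x : Fin n → ℕ) (i : Fin n) : mval x ≤ x i :=
  Nat.sInf_le ⟨i, rfl⟩

lemma exists_mval {n : ℕ} (hn : 0 < n) (x : Fin n → ℕ) : ∃ i, x i = mval x := by
  have hne : (Set.range x).Nonempty := ⟨x ⟨0, hn⟩, ⟨0, hn⟩, rfl⟩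
  obtain ⟨i, hi⟩ := Nat.sInf_mem hne
  exact ⟨i, hi⟩

lemma mval_eq {n : ℕ} (x : Fin n → ℕ) (k : ℕ) (hlb : ∀ i, k ≤ x i)
    (i : Fin n) (hi : x i = k) : mval x = k :=
  le_antisymm (hi ▸ mval_le x i)
    (le_csInf ⟨x i, i, rfl⟩ (by rintro b ⟨j, rfl⟩; exact hlb j))

lemma mem_Mset {n : ℕ} (x : Fin n → ℕ) (i : Fin n) :
    i ∈ Mset x ↔ x i = mval x := by
  simp [Mset]

/-- For a minimally transversal-free hypergraph `H`, `N(k)` consists exactly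
of the positions `x` with `m(x) = k` and `M(x) ∉ H^t`. -/
theorem hyp_nk_mtf (n : ℕ) (hn : 0 < n)
    (H : Finset (Finset (Fin n))) (hH : ∅ ∉ H) (hMTF : MTF H)
    (k : ℕ) (x : Fin n → ℕ) :
    NPos H k x ↔ mval x = k ∧ ¬ IsTransversal H (Mset x) := by
  obtain ⟨hH1, hH2⟩ := hMTF
  constructor
  · rintro ⟨y, ⟨hle, hne, hD⟩, hmy, htr⟩
    have hky : ∀ i, k ≤ y i := fun i => hmy ▸ mval_le y i
    have hkx : ∀ i, k ≤ x i := fun i => le_trans (hky i) (hle i)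
    have hmx : mval x = k := by
      by_contra hcon
      have hxk : ∀ i, k < x i := by
        intro i
        rcases lt_or_eq_of_le (hkx i) with h | h
        · exact h
        · exact absurd (mval_eq x k hkx i h.symm) hcon
      apply hH1 _ hD
      intro B hB
      obtain ⟨j, hj⟩ := htr B hB
      rw [Finset.mem_inter] at hj
      refine ⟨j, Finset.mem_inter.mpr ⟨?_, hj.2⟩⟩
      have hyj : y j = k := by rw [(mem_Mset y j).mp hj.1, hmy]
      simp only [Finset.mem_filter, Finset.mem_univ, true_and]
      exact hyj ▸ hxk j
    refine ⟨hmx, fun htrx => ?_⟩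
    obtain ⟨j, hj⟩ := htrx _ hD
    rw [Finset.mem_inter] at hj
    have hxj : x j = k := by rw [(mem_Mset x j).mp hj.1, hmx]
    have : y j < x j := by
      have := hj.2; simp only [Finset.mem_filter, Finset.mem_univ, true_and] at this
      exact this
    have := hky j
    omega
  · rintro ⟨hmx, hntr⟩
    obtain ⟨i0, hi0⟩ := exists_mval hn x
    have hi0M : i0 ∈ Mset x := (mem_Mset x i0).mpr hi0
    simp only [IsTransversal, not_forall] at hntr
    obtain ⟨B, hB, hBM⟩ := hntr
    rw [Finset.not_nonempty_iff_eq_empty] at hBM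
    set S := Finset.univ \ Mset x with hS
    have hBS : B ⊆ S := by
      intro j hj
      simp only [hS, Finset.mem_sdiff, Finset.mem_univ, true_and]
      intro hjM
      have : j ∈ Mset x ∩ B := Finset.mem_inter.mpr ⟨hjM, hj⟩
      rw [hBM] at this
      exact absurd this (Finset.notMem_empty j)
    have hBne : B.Nonempty := Finset.nonempty_iff_ne_empty.mpr (fun h => hH (h ▸ hB))
    have hSne : S.Nonempty := ⟨hBne.choose, hBS hBne.choose_spec⟩
    have hSnu : S ≠ Finset.univ := by
      intro h
      have : i0 ∈ S := h ▸ Finset.mem_univ i0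
      simp only [hS, Finset.mem_sdiff] at this
      exact this.2 hi0M
    obtain ⟨A, hA, hAtr⟩ := hH2 S hSne hSnu
    rw [subHyp, Finset.mem_filter] at hA
    obtain ⟨hAH, hAS⟩ := hA
    have hAne : A.Nonempty := Finset.nonempty_iff_ne_empty.mpr (fun h => hH (h ▸ hAH))
    have hkxA : ∀ i ∈ A, k < x i := by
      intro i hi
      have hiS := hAS hi
      simp only [hS, Finset.mem_sdiff, Finset.mem_univ, true_and] at hiS
      have : x i ≠ k := fun h => hiS ((mem_Mset x i).mpr (h.trans hmx.symm))
      have := hmx ▸ mval_le x i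
      omega
    refine ⟨fun i => if i ∈ A then k else x i, ⟨?_, ?_, ?_⟩, ?_, ?_⟩
    · intro i
      by_cases h : i ∈ A <;> simp [h]
      exact le_of_lt (hkxA i h)
    · intro h
      obtain ⟨a, ha⟩ := hAne
      have := congrFun h a
      simp only [ha, if_pos] at this
      exact absurd this (ne_of_lt (hkxA a ha))
    · convert hAH using 1
      ext i
      simp only [Finset.mem_filter, Finset.mem_univ, true_and]
      by_cases h : i ∈ A <;> simp [h, hkxA i]
    · obtain ⟨a, ha⟩ := hAne
      refine mval_eq _ k (fun i => ?_) a (by simp [ha])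
      by_cases h : i ∈ A <;> simp [h]
      exact hmx ▸ mval_le x i
    · have hmvy : mval (fun i => if i ∈ A then k else x i) = k := by
        obtain ⟨a, ha⟩ := hAne
        refine mval_eq _ k (fun i => ?_) a (by simp [ha])
        by_cases h : i ∈ A <;> simp [h]
        exact hmx ▸ mval_le x i
      have hsub : ∀ i, (i ∈ Mset x ∨ i ∈ A) →
          i ∈ Mset (fun i => if i ∈ A then k else x i) := by
        intro i hi
        rw [mem_Mset, hmvy]
        rcases hi with hi | hi
        · by_cases h : i ∈ A
          · simp [h]
          · simp only [h, if_neg, if_false]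
            rw [(mem_Mset x i).mp hi, hmx]
        · simp [hi]
      intro B' hB'
      by_cases hc : ∃ j ∈ B', j ∈ Mset x
      · obtain ⟨j, hj1, hj2⟩ := hc
        exact ⟨j, Finset.mem_inter.mpr ⟨hsub j (Or.inl hj2), hj1⟩⟩
      · push_neg at hc
        have hB'S : B' ⊆ S := by
          intro j hj
          simp only [hS, Finset.mem_sdiff, Finset.mem_univ, true_and]
          exact hc j hj
        have hB'sub : B' ∈ subHyp H S := Finset.mem_filter.mpr ⟨hB', hB'S⟩
        obtain ⟨j, hj⟩ := hAtr B' hB'sub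
        rw [Finset.mem_inter] at hj
        exact ⟨j, Finset.mem_inter.mpr ⟨hsub j (Or.inr hj.1), hj.2⟩⟩
end
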